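/- arXiv:2511.21103 — 3 statements merged into one kernel-verified Lean document; each statement's English description precedes it below -/
import Mathlib

section
/- (Step lower bound, first form) Let p be a distribution over V^n and (A_1,...,A_R) an ordered partition of {1,...,n} with prefix unions C_r. Suppose there exists f ∈ [0,1) such that for every round r and every i ∈ A_r, (1+|A_r|)(1 - p(x^i | x^{C_r})) ≤ f. Then R ≥ (-log p(x)) / log((n+1)/((1-f)n+1)). -/
open Finset Real

noncomputable def marg {V : Type*} [Fintype V] [DecidableEq V] {n : ℕ}
    (p : (Fin n → V) → ℝ) (C : Finset (Fin n)) (x : Fin n → V) : ℝ :=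
  ∑ y : Fin n → V, if ∀ i ∈ C, y i = x i then p y else 0

noncomputable def condProb {V : Type*} [Fintype V] [DecidableEq V] {n : ℕ}
    (p : (Fin n → V) → ℝ) (A C : Finset (Fin n)) (x : Fin n → V) : ℝ :=
  marg p (A ∪ C) x / marg p C x

def prefixC {n R : ℕ} (A : Fin R → Finset (Fin n)) (r : Fin R) : Finset (Fin n) :=
  (Finset.Iio r).biUnion A

section aux
variable {V : Type*} [Fintype V] [DecidableEq V] {n : ℕ}
variable (p : (Fin n → V) → ℝ) (x : Fin n → V)

lemma marg_ge (hp : ∀ y, 0 ≤ p y) (C : Finset (Fin n)) : p x ≤ marg p C x := by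
  classical
  have h := Finset.single_le_sum
    (f := fun y : Fin n → V => if ∀ i ∈ C, y i = x i then p y else 0)
    (fun y _ => by
      by_cases h : ∀ i ∈ C, y i = x i
      · rw [if_pos h]; exact hp y
      · rw [if_neg h])
    (Finset.mem_univ x)
  simpa [marg] using h

lemma marg_empty (hsum : ∑ y, p y = 1) : marg p ∅ x = 1 := by
  simp [marg, hsum]

lemma marg_univ : marg p Finset.univ x = p x := by
  classical
  unfold marg
  rw [Finset.sum_eq_single x]
  · simp
  · intro y _ hy
    rw [if_neg]
    intro h
    exact hy (funext fun i => h i (Finset.mem_univ i))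
  · simp

lemma union_bound (hp : ∀ y, 0 ≤ p y) (A C : Finset (Fin n)) :
    marg p C x - marg p (A ∪ C) x ≤ ∑ i ∈ A, (marg p C x - marg p ({i} ∪ C) x) := by
  classical
  unfold marg
  rw [← Finset.sum_sub_distrib]
  simp_rw [← Finset.sum_sub_distrib]
  rw [Finset.sum_comm]
  apply Finset.sum_le_sum
  intro y _
  by_cases hC : ∀ i ∈ C, y i = x i
  · by_cases hA : ∀ i ∈ A ∪ C, y i = x i
    · rw [if_pos hC, if_pos hA, sub_self]
      apply Finset.sum_nonneg
      intro i hi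
      by_cases hi' : ∀ j ∈ ({i} : Finset (Fin n)) ∪ C, y j = x j
      · rw [if_pos hi', sub_self]
      · rw [if_neg hi', sub_zero]; exact hp y
    · rw [if_pos hC, if_neg hA, sub_zero]
      push_neg at hA
      obtain ⟨i0, hi0, hne⟩ := hA
      have hi0A : i0 ∈ A := by
        rcases Finset.mem_union.mp hi0 with h | h
        · exact h
        · exact absurd (hC i0 h) hne
      have hterm : p y = p y -
          (if ∀ j ∈ ({i0} : Finset (Fin n)) ∪ C, y j = x j then p y else 0) := by
        rw [if_neg, sub_zero]
        intro h
        exact hne (h i0 (Finset.mem_union_left _ (Finset.mem_singleton_self i0)))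
      refine le_trans (le_of_eq hterm)
        (Finset.single_le_sum (f := fun i => p y -
          (if ∀ j ∈ ({i} : Finset (Fin n)) ∪ C, y j = x j then p y else 0)) ?_ hi0A)
      intro i _
      by_cases hi' : ∀ j ∈ ({i} : Finset (Fin n)) ∪ C, y j = x j
      · rw [if_pos hi', sub_self]
      · rw [if_neg hi', sub_zero]; exact hp y
  · have hA : ¬ ∀ i ∈ A ∪ C, y i = x i := fun h =>
      hC (fun i hi => h i (Finset.mem_union_right _ hi))
    rw [if_neg hC, if_neg hA, sub_self]
    apply Finset.sum_nonneg
    intro i _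
    have hi' : ¬ ∀ j ∈ ({i} : Finset (Fin n)) ∪ C, y j = x j := fun h =>
      hC (fun j hj => h j (Finset.mem_union_right _ hj))
    simp [hC, hi']

lemma cond_union_bound (hp : ∀ y, 0 ≤ p y) (A C : Finset (Fin n))
    (hm : 0 < marg p C x) :
    1 - condProb p A C x ≤ ∑ i ∈ A, (1 - condProb p {i} C x) := by
  have hub := union_bound p x hp A C
  have h1 : 1 - condProb p A C x = (marg p C x - marg p (A ∪ C) x) / marg p C x := by
    rw [condProb]; field_simp
  have h2 : ∀ i : Fin n, 1 - condProb p {i} C x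
      = (marg p C x - marg p ({i} ∪ C) x) / marg p C x := by
    intro i; rw [condProb]; field_simp
  rw [h1]
  calc (marg p C x - marg p (A ∪ C) x) / marg p C x
      ≤ (∑ i ∈ A, (marg p C x - marg p ({i} ∪ C) x)) / marg p C x :=
        (div_le_div_iff_of_pos_right hm).mpr hub
    _ = ∑ i ∈ A, (1 - condProb p {i} C x) := by
        rw [Finset.sum_div]
        exact Finset.sum_congr rfl fun i _ => (h2 i).symm

end aux

theorem step_lower_bound_first_form {V : Type*} [Fintype V] [DecidableEq V] {n R : ℕ}
    (p : (Fin n → V) → ℝ) (hp : ∀ y, 0 ≤ p y) (hsum : ∑ y, p y = 1)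
    (A : Fin R → Finset (Fin n))
    (hdisj : ∀ r s, r ≠ s → Disjoint (A r) (A s))
    (hcover : Finset.univ.biUnion A = Finset.univ)
    (x : Fin n → V) (hx : 0 < p x)
    {f : ℝ} (hf0 : 0 ≤ f) (hf1 : f < 1)
    (hconf : ∀ r, ∀ i ∈ A r,
      (1 + ((A r).card : ℝ)) * (1 - condProb p {i} (prefixC A r) x) ≤ f) :
    (R : ℝ) ≥ (-Real.log (p x)) / Real.log (((n : ℝ) + 1) / ((1 - f) * n + 1)) := by
  classical
  have hnn : (0:ℝ) ≤ (n:ℝ) := Nat.cast_nonneg n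
  have hden : 0 < (1 - f) * (n:ℝ) + 1 := by nlinarith
  have hnum : 0 < (n:ℝ) + 1 := by positivity
  set c : ℝ := ((1 - f) * (n:ℝ) + 1) / ((n:ℝ) + 1) with hc_def
  have hc : 0 < c := div_pos hden hnum
  set L : ℝ := Real.log (((n : ℝ) + 1) / ((1 - f) * n + 1)) with hL_def
  have hLc : L = -Real.log c := by
    rw [hL_def, hc_def, ← Real.log_inv]
    congr 1
    rw [inv_div]
  -- each round's conditional probability is at least c
  have hcond : ∀ r : Fin R, c ≤ condProb p (A r) (prefixC A r) x := by
    intro r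
    set C := prefixC A r with hC
    set q := condProb p (A r) C x with hq
    have hmC : 0 < marg p C x := lt_of_lt_of_le hx (marg_ge p x hp C)
    have hub := cond_union_bound p x hp (A r) C hmC
    set a : ℝ := ((A r).card : ℝ) with ha_def
    have ha0 : (0:ℝ) ≤ a := Nat.cast_nonneg _
    have ha1 : (0:ℝ) < 1 + a := by linarith
    have han : a ≤ (n:ℝ) := by
      rw [ha_def]
      exact_mod_cast le_trans (Finset.card_le_univ (A r)) (le_of_eq (by simp))
    have hsum' : ∑ i ∈ A r, (1 + a) * (1 - condProb p {i} C x) ≤ a * f := by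
      calc ∑ i ∈ A r, (1 + a) * (1 - condProb p {i} C x)
          ≤ ∑ _i ∈ A r, f := Finset.sum_le_sum (fun i hi => hconf r i hi)
        _ = a * f := by rw [Finset.sum_const, nsmul_eq_mul]
    rw [← Finset.mul_sum] at hsum'
    have h1 : (1 + a) * (1 - q) ≤ a * f :=
      le_trans (mul_le_mul_of_nonneg_left hub (le_of_lt ha1)) hsum'
    have h2 : 1 - f ≤ q := by nlinarith
    rw [hc_def, div_le_iff₀ hnum]
    nlinarith [mul_nonneg (by linarith : (0:ℝ) ≤ (n:ℝ) - a) (by linarith : 0 ≤ q - (1 - f))]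
  -- telescoping product
  set T : ℕ → Finset (Fin n) :=
    fun k => (Finset.univ.filter (fun r : Fin R => r.val < k)).biUnion A with hT_def
  have hT : ∀ k, k ≤ R → marg p (T k) x =
      ∏ r ∈ Finset.univ.filter (fun r : Fin R => r.val < k),
        condProb p (A r) (prefixC A r) x := by
    intro k
    induction k with
    | zero =>
        intro _
        have : T 0 = ∅ := by simp [hT_def]
        rw [this, marg_empty p x hsum]
        simp
    | succ k ih =>
        intro hk
        have hk' : k < R := hk
        set rk : Fin R := ⟨k, hk'⟩ with hrk
        have hpre : prefixC A rk = T k := by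
          apply Finset.biUnion_congr _ (fun _ _ => rfl)
          ext s
          simp [Fin.lt_def, hrk]
        have hTsucc : T (k + 1) = A rk ∪ T k := by
          ext i
          simp only [hT_def, Finset.mem_biUnion, Finset.mem_filter, Finset.mem_univ,
            true_and, Finset.mem_union, Nat.lt_succ_iff_lt_or_eq]
          constructor
          · rintro ⟨r, hr | hr, hi⟩
            · exact Or.inr ⟨r, hr, hi⟩
            · exact Or.inl (by rwa [show r = rk from Fin.ext hr] at hi)
          · rintro (hi | ⟨r, hr, hi⟩)
            · exact ⟨rk, Or.inr rfl, hi⟩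
            · exact ⟨r, Or.inl hr, hi⟩
        have hfilter : Finset.univ.filter (fun r : Fin R => r.val < k + 1) =
            insert rk (Finset.univ.filter (fun r : Fin R => r.val < k)) := by
          ext s
          simp only [Finset.mem_filter, Finset.mem_univ, true_and, Finset.mem_insert,
            Nat.lt_succ_iff_lt_or_eq, Fin.ext_iff, hrk]
          tauto
        have hmTk : marg p (T k) x ≠ 0 :=
          ne_of_gt (lt_of_lt_of_le hx (marg_ge p x hp (T k)))
        rw [hfilter, Finset.prod_insert (by simp [hrk]), ← ih (le_of_lt hk'), hTsucc,
          condProb, hpre, div_mul_cancel₀ _ hmTk]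
  have hfR : Finset.univ.filter (fun r : Fin R => r.val < R) = Finset.univ := by
    ext s; simp [s.isLt]
  have hTR : T R = Finset.univ := by
    rw [hT_def]
    dsimp only
    rw [hfR, hcover]
  have hprod : p x = ∏ r : Fin R, condProb p (A r) (prefixC A r) x := by
    have := hT R le_rfl
    rw [hTR, marg_univ, hfR] at this
    exact this
  -- take logs
  have hcpos : ∀ r : Fin R, 0 < condProb p (A r) (prefixC A r) x :=
    fun r => lt_of_lt_of_le hc (hcond r)
  have hlog : Real.log (p x) = ∑ r : Fin R, Real.log (condProb p (A r) (prefixC A r) x) := by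
    rw [hprod]
    exact Real.log_prod (fun r _ => ne_of_gt (hcpos r))
  have hlogsum : (R : ℝ) * Real.log c ≤ Real.log (p x) := by
    rw [hlog]
    calc (R : ℝ) * Real.log c = ∑ _r : Fin R, Real.log c := by
          rw [Finset.sum_const, nsmul_eq_mul]; simp
      _ ≤ ∑ r : Fin R, Real.log (condProb p (A r) (prefixC A r) x) :=
          Finset.sum_le_sum (fun r _ => Real.log_le_log hc (hcond r))
  have hkey : -Real.log (p x) ≤ (R : ℝ) * L := by
    rw [hLc]; linarith
  have hL0 : 0 ≤ L := by
    apply Real.log_nonneg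
    rw [le_div_iff₀ hden]
    nlinarith
  rcases eq_or_lt_of_le hL0 with hL1 | hL1
  · rw [ge_iff_le, ← hL1, div_zero]
    exact Nat.cast_nonneg R
  · rw [ge_iff_le, div_le_iff₀ hL1]
    exact hkey
end

section
/- (Step lower bound, second form) Let p be a distribution over V^n and (A_1,...,A_R) an ordered partition of {1,...,n} with prefix unions C_r. Suppose f ∈ (0,1] is such that (1+|A_r|)(1 - p(x^i | x^{C_r})) ≤ f for all r and i ∈ A_r, and define the total approximation error ε = |(-log p(x)) - Σ_r Σ_{i∈A_r} (-log p(x^i | x^{C_r}))|. Then R ≥ (-log p(x) - ε)/f. -/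
open Finset Real

theorem step_lower_bound_second_form {V : Type*} [Fintype V] [DecidableEq V] {n R : ℕ}
    (p : (Fin n → V) → ℝ) (hp : ∀ y, 0 ≤ p y) (hsum : ∑ y, p y = 1)
    (A : Fin R → Finset (Fin n))
    (hdisj : ∀ r s, r ≠ s → Disjoint (A r) (A s))
    (hcover : Finset.univ.biUnion A = Finset.univ)
    (x : Fin n → V) (hx : 0 < p x)
    {f : ℝ} (hf0 : 0 < f) (hf1 : f ≤ 1)
    (hconf : ∀ r, ∀ i ∈ A r,
      (1 + ((A r).card : ℝ)) * (1 - condProb p {i} (prefixC A r) x) ≤ f)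
    (ε : ℝ)
    (hε : ε = |(-Real.log (p x)) -
      ∑ r, ∑ i ∈ A r, (-Real.log (condProb p {i} (prefixC A r) x))|) :
    (R : ℝ) ≥ (-Real.log (p x) - ε) / f := by
  have key : ∀ r : Fin R,
      ∑ i ∈ A r, (-Real.log (condProb p {i} (prefixC A r) x)) ≤ f := by
    intro r
    rcases (A r).eq_empty_or_nonempty with he | hne
    · simp [he]; linarith
    set a : ℝ := ((A r).card : ℝ) with ha
    have ha1 : 1 ≤ a := by
      have h := Finset.card_pos.mpr hne
      rw [ha]
      exact_mod_cast h
    have hd : 0 < 1 + a - f := by linarith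
    have h1a : 0 < 1 + a := by linarith
    have hterm : ∀ i ∈ A r,
        (-Real.log (condProb p {i} (prefixC A r) x)) ≤
          Real.log (1 + a) - Real.log (1 + a - f) := by
      intro i hi
      set q := condProb p {i} (prefixC A r) x
      have hc := hconf r i hi
      have hq : (1 + a - f) / (1 + a) ≤ q := by
        rw [div_le_iff₀ h1a]
        nlinarith
      have hlb : 0 < (1 + a - f) / (1 + a) := div_pos hd h1a
      have hlog := Real.log_le_log hlb hq
      rw [Real.log_div (ne_of_gt hd) (ne_of_gt h1a)] at hlog
      linarith
    calc ∑ i ∈ A r, (-Real.log (condProb p {i} (prefixC A r) x))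
        ≤ ∑ i ∈ A r, (Real.log (1 + a) - Real.log (1 + a - f)) :=
          Finset.sum_le_sum hterm
      _ = a * (Real.log (1 + a) - Real.log (1 + a - f)) := by
          rw [Finset.sum_const, nsmul_eq_mul]
      _ ≤ f := by
          have hlg : Real.log (1 + a) - Real.log (1 + a - f) ≤ f / (1 + a - f) := by
            have := Real.log_le_sub_one_of_pos (x := (1 + a) / (1 + a - f))
              (div_pos h1a hd)
            rw [Real.log_div (ne_of_gt h1a) (ne_of_gt hd)] at this
            have heq : (1 + a) / (1 + a - f) - 1 = f / (1 + a - f) := by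
              field_simp
              ring
            linarith
          have h2 : a * (f / (1 + a - f)) ≤ f := by
            rw [mul_div_assoc', div_le_iff₀ hd]
            nlinarith
          have hnn : 0 ≤ a := by linarith
          nlinarith [mul_le_mul_of_nonneg_left hlg hnn]
  set S := ∑ r, ∑ i ∈ A r, (-Real.log (condProb p {i} (prefixC A r) x)) with hS
  have hSle : S ≤ (R : ℝ) * f := by
    calc S ≤ ∑ _r : Fin R, f := Finset.sum_le_sum fun r _ => key r
      _ = (R : ℝ) * f := by simp [mul_comm]
  have hεge : -Real.log (p x) - S ≤ ε := by
    rw [hε]; exact le_abs_self _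
  rw [ge_iff_le, div_le_iff₀ hf0]
  linarith
end

section
/- Under the dynamic-threshold assumption with factor f ≤ 1, each round reveals at most f nats of the product-of-marginals surrogate information: Σ_{i∈A_r} (-log p(x^i | x^{C_r})) ≤ |A_r| · log(1 + f/((1-f)+|A_r|)) ≤ f. -/
open Finset Real

theorem per_round_surrogate_info {V : Type*} [Fintype V] [DecidableEq V] {n : ℕ}
    (p : (Fin n → V) → ℝ) (hp : ∀ y, 0 ≤ p y) (hsum : ∑ y, p y = 1)
    (A C : Finset (Fin n)) (hAC : Disjoint A C)
    (x : Fin n → V) (hx : 0 < p x)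
    {f : ℝ} (hf0 : 0 ≤ f) (hf1 : f ≤ 1)
    (hconf : ∀ i ∈ A, (1 + (A.card : ℝ)) * (1 - condProb p {i} C x) ≤ f) :
    (∑ i ∈ A, (-Real.log (condProb p {i} C x)) ≤
      (A.card : ℝ) * Real.log (1 + f / ((1 - f) + A.card))) ∧
    (A.card : ℝ) * Real.log (1 + f / ((1 - f) + A.card)) ≤ f := by
  rcases A.eq_empty_or_nonempty with rfl | hA
  · simp [hf0]
  · have hm1 : (1 : ℝ) ≤ A.card := by exact_mod_cast Finset.card_pos.mpr hA
    set m : ℝ := (A.card : ℝ) with hm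
    have hm0 : 0 < 1 + m := by linarith
    have hden : 0 < (1 - f) + m := by linarith
    have ht0 : 0 ≤ f / ((1 - f) + m) := div_nonneg hf0 hden.le
    have hlb : 0 < 1 - f / (1 + m) := by
      rw [sub_pos, div_lt_one hm0]; linarith
    have heq : (1 - f / (1 + m))⁻¹ = 1 + f / ((1 - f) + m) := by
      refine inv_eq_of_mul_eq_one_right ?_
      field_simp
      ring
    have key : ∀ i ∈ A, -Real.log (condProb p {i} C x)
        ≤ Real.log (1 + f / ((1 - f) + m)) := by
      intro i hi
      have h := hconf i hi
      have h1 : 1 - f / (1 + m) ≤ condProb p {i} C x := by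
        have h2 : 1 - condProb p {i} C x ≤ f / (1 + m) := by
          rw [le_div_iff₀ hm0]; nlinarith
        linarith
      have h3 := Real.log_le_log hlb h1
      rw [← heq, Real.log_inv]
      linarith
    have hmain : ∑ i ∈ A, -Real.log (condProb p {i} C x)
        ≤ m * Real.log (1 + f / ((1 - f) + m)) := by
      calc ∑ i ∈ A, -Real.log (condProb p {i} C x)
          ≤ ∑ _i ∈ A, Real.log (1 + f / ((1 - f) + m)) := Finset.sum_le_sum key
        _ = m * Real.log (1 + f / ((1 - f) + m)) := by
            rw [Finset.sum_const, nsmul_eq_mul]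
    refine ⟨hmain, ?_⟩
    have hlog : Real.log (1 + f / ((1 - f) + m)) ≤ f / ((1 - f) + m) := by
      have := Real.log_le_sub_one_of_pos (by linarith : (0:ℝ) < 1 + f / ((1 - f) + m))
      linarith
    have h2 : m * (f / ((1 - f) + m)) ≤ f := by
      rw [mul_div_assoc', div_le_iff₀ hden]
      nlinarith
    calc m * Real.log (1 + f / ((1 - f) + m))
        ≤ m * (f / ((1 - f) + m)) :=
          mul_le_mul_of_nonneg_left hlog (by linarith)
      _ ≤ f := h2
end
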